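/- arXiv:1611.08140 — 3 statements merged into one kernel-verified Lean document; each statement's English description precedes it below -/
import Mathlib

section
/- Let κ be an uncountable regular cardinal. Every combinatorially meager subset of 2^κ is κ-meager: if M ⊆ 2^κ and there is a κ-chopped function (x, I) such that no member of M matches (x, I), then M is κ-meager. -/
namespace GenCichon

noncomputable section

open Cardinal Set Ordinal

variable (κ : Cardinal.{0})

/-- The ordinals below `κ`, i.e. the cardinal `κ` viewed as a set of ordinals. -/
abbrev Idx : Type 1 := ↥(Set.Iio κ.ord)

/-- The generalized Cantor space `2^κ`. -/
abbrev GenCantor : Type 1 := Idx κ → Bool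

/-- The generalized Baire space `κ^κ`. -/
abbrev GenBaire : Type 1 := Idx κ → Idx κ

/-- The basic open (cylinder) set `[σ]` determined by the element `σ` of `2^{<κ}`
with domain `[0, δ)` (values of `σ` at or above `δ` are irrelevant). -/
def cyl (δ : Ordinal) (σ : Ordinal → Bool) : Set (GenCantor κ) :=
  { x | ∀ β : Idx κ, β.1 < δ → x β = σ β.1 }

/-- `A ⊆ 2^κ` is nowhere dense: every basic open set `[σ]`, `σ ∈ 2^{<κ}`, has a
basic open refinement `[σ'] ⊆ [σ]` disjoint from `A`. -/
def IsNwd (A : Set (GenCantor κ)) : Prop :=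
  ∀ δ < κ.ord, ∀ σ : Ordinal → Bool, ∃ δ', δ ≤ δ' ∧ δ' < κ.ord ∧
    ∃ σ' : Ordinal → Bool, (∀ β < δ, σ' β = σ β) ∧ cyl κ δ' σ' ∩ A = ∅

/-- `A ⊆ 2^κ` is `κ`-meager: a union of `κ` many nowhere dense sets. -/
def IsKMeager (A : Set (GenCantor κ)) : Prop :=
  ∃ B : Idx κ → Set (GenCantor κ), (∀ i, IsNwd κ (B i)) ∧ A = ⋃ i, B i

/-- The covering number of the `κ`-meager ideal. -/
def covM : Cardinal.{1} :=
  sInf { c : Cardinal.{1} | ∃ J : Set (Set (GenCantor κ)),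
    (∀ A ∈ J, IsKMeager κ A) ∧ ⋃₀ J = Set.univ ∧ c = #J }

/-- The uniformity number of the `κ`-meager ideal. -/
def nonM : Cardinal.{1} :=
  sInf { c : Cardinal.{1} | ∃ X : Set (GenCantor κ), ¬ IsKMeager κ X ∧ c = #X }

/-- The additivity number of the `κ`-meager ideal. -/
def addM : Cardinal.{1} :=
  sInf { c : Cardinal.{1} | ∃ J : Set (Set (GenCantor κ)),
    (∀ A ∈ J, IsKMeager κ A) ∧ ¬ IsKMeager κ (⋃₀ J) ∧ c = #J }

/-- The cofinality number of the `κ`-meager ideal. -/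
def cofM : Cardinal.{1} :=
  sInf { c : Cardinal.{1} | ∃ J : Set (Set (GenCantor κ)),
    (∀ A ∈ J, IsKMeager κ A) ∧ (∀ A, IsKMeager κ A → ∃ B ∈ J, A ⊆ B) ∧ c = #J }

/-- `g` eventually dominates `f` (`f <* g`). -/
def EvDom (f g : GenBaire κ) : Prop :=
  ∃ α : Idx κ, ∀ β : Idx κ, α < β → f β < g β

/-- The unbounding number `𝔟_κ`. -/
def bK : Cardinal.{1} :=
  sInf { c : Cardinal.{1} | ∃ F : Set (GenBaire κ),
    (∀ g : GenBaire κ, ∃ f ∈ F, ¬ EvDom κ f g) ∧ c = #F }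

/-- The dominating number `𝔡_κ`. -/
def dK : Cardinal.{1} :=
  sInf { c : Cardinal.{1} | ∃ F : Set (GenBaire κ),
    (∀ g : GenBaire κ, ∃ f ∈ F, EvDom κ g f) ∧ c = #F }

/-- `f` and `g` are eventually different (`f ≠* g`). -/
def EvDiff (f g : GenBaire κ) : Prop :=
  #{ α : Idx κ | f α = g α } < Cardinal.lift.{1} κ

/-- `𝔟_κ(≠*)`: least size of a family such that every `g` is cofinally matching
with some member of it. -/
def bNeq : Cardinal.{1} :=
  sInf { c : Cardinal.{1} | ∃ F : Set (GenBaire κ),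
    (∀ g : GenBaire κ, ∃ f ∈ F, ¬ EvDiff κ f g) ∧ c = #F }

/-- `𝔡_κ(≠*)`: least size of a family such that every `g` is eventually different
from some member of it. -/
def dNeq : Cardinal.{1} :=
  sInf { c : Cardinal.{1} | ∃ F : Set (GenBaire κ),
    (∀ g : GenBaire κ, ∃ f ∈ F, EvDiff κ f g) ∧ c = #F }

/-- An interval partition of `κ`: a strictly increasing continuous sequence
`(pts α : α < κ)` of ordinals below `κ` with `pts 0 = 0`; the `α`-th interval is
`[pts α, pts (α+1))`.  (Values at or above `κ` are normalized to `0`, so that an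
interval partition is determined by its restriction below `κ`.) -/
structure IntervalPartition where
  pts : Ordinal → Ordinal
  zero : pts 0 = 0
  lt_ord : ∀ α < κ.ord, pts α < κ.ord
  strictMono : ∀ α β : Ordinal, α < β → β < κ.ord → pts α < pts β
  isCont : ∀ δ < κ.ord, Order.IsSuccLimit δ → pts δ = ⨆ β : ↥(Set.Iio δ), pts β.1
  eq_zero_of_le : ∀ α, κ.ord ≤ α → pts α = 0

/-- The `β`-th interval of `J` is included in the `α`-th interval of `I`. -/
def SubIntv (J : IntervalPartition κ) (β : Ordinal) (I : IntervalPartition κ)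
    (α : Ordinal) : Prop :=
  I.pts α ≤ J.pts β ∧ J.pts (β + 1) ≤ I.pts (α + 1)

/-- `I` dominates `J` (`J ≤* I`): from some point on, every interval of `I`
contains an interval of `J`. -/
def IPDom (J I : IntervalPartition κ) : Prop :=
  ∃ γ < κ.ord, ∀ α, γ < α → α < κ.ord → ∃ β < κ.ord, SubIntv κ J β I α

/-- `y` matches the `κ`-chopped function `(x, I)`: `y` and `x` agree on cofinally
many intervals of `I`. -/
def Matches (y x : GenCantor κ) (I : IntervalPartition κ) : Prop :=
  ∀ γ < κ.ord, ∃ α, γ ≤ α ∧ α < κ.ord ∧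
    ∀ β : Idx κ, I.pts α ≤ β.1 → β.1 < I.pts (α + 1) → y β = x β

/-- The set of elements of `2^κ` matching the `κ`-chopped function `(x, I)`. -/
def MatchSet (x : GenCantor κ) (I : IntervalPartition κ) : Set (GenCantor κ) :=
  { y | Matches κ y x I }

/-- `h ∈ κ^κ` tends to `κ`: `lim_{α → κ} h(α) = κ`. -/
def TendsToTop (h : GenBaire κ) : Prop :=
  ∀ γ : Idx κ, ∃ α : Idx κ, ∀ β : Idx κ, α ≤ β → γ ≤ h β

/-- `φ` is an `h`-slalom: `φ(α)` is a subset of `κ` of cardinality `|h(α)|`. -/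
def IsSlalom (h : GenBaire κ) (φ : Idx κ → Set (Idx κ)) : Prop :=
  ∀ α : Idx κ, #(φ α) = Cardinal.lift.{1} (h α).1.card

/-- The (total) slalom `φ` localizes `f` (`f ∈* φ`). -/
def Localizes (φ : Idx κ → Set (Idx κ)) (f : GenBaire κ) : Prop :=
  #{ α : Idx κ | f α ∉ φ α } < Cardinal.lift.{1} κ

/-- `𝔟_h(∈*)`. -/
def bLoc (h : GenBaire κ) : Cardinal.{1} :=
  sInf { c : Cardinal.{1} | ∃ F : Set (GenBaire κ),
    (∀ φ : Idx κ → Set (Idx κ), IsSlalom κ h φ → ∃ f ∈ F, ¬ Localizes κ φ f) ∧ c = #F }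

/-- `𝔡_h(∈*)`. -/
def dLoc (h : GenBaire κ) : Cardinal.{1} :=
  sInf { c : Cardinal.{1} | ∃ Φ : Set (Idx κ → Set (Idx κ)),
    (∀ φ ∈ Φ, IsSlalom κ h φ) ∧ (∀ f : GenBaire κ, ∃ φ ∈ Φ, Localizes κ φ f) ∧ c = #Φ }

/-- A partial `h`-slalom: a slalom whose domain is a subset of `κ` of cardinality `κ`.
(The values outside the domain are normalized to `∅`.) -/
structure PartialSlalom (h : GenBaire κ) where
  dom : Set (Idx κ)
  dom_card : #dom = Cardinal.lift.{1} κ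
  fn : Idx κ → Set (Idx κ)
  fn_card : ∀ α ∈ dom, #(fn α) = Cardinal.lift.{1} (h α).1.card
  eq_empty_of_not_mem : ∀ α ∉ dom, fn α = ∅

/-- The partial slalom `φ` localizes `f` (`f ∈* φ`). -/
def PLocalizes {h : GenBaire κ} (φ : PartialSlalom κ h) (f : GenBaire κ) : Prop :=
  #{ α : Idx κ | α ∈ φ.dom ∧ f α ∉ φ.fn α } < Cardinal.lift.{1} κ

/-- `𝔟_h(p∈*)`. -/
def bPLoc (h : GenBaire κ) : Cardinal.{1} :=
  sInf { c : Cardinal.{1} | ∃ F : Set (GenBaire κ),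
    (∀ φ : PartialSlalom κ h, ∃ f ∈ F, ¬ PLocalizes κ φ f) ∧ c = #F }

/-- `𝔡_h(p∈*)`. -/
def dPLoc (h : GenBaire κ) : Cardinal.{1} :=
  sInf { c : Cardinal.{1} | ∃ Φ : Set (PartialSlalom κ h),
    (∀ f : GenBaire κ, ∃ φ ∈ Φ, PLocalizes κ φ f) ∧ c = #Φ }

/-- `X ⊆ 2^κ` is open in the `<κ`-box topology. -/
def IsOpenK (X : Set (GenCantor κ)) : Prop :=
  ∀ x ∈ X, ∃ δ < κ.ord, { y : GenCantor κ | ∀ β : Idx κ, β.1 < δ → y β = x β } ⊆ X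

/-- `X ⊆ 2^κ` is dense: it meets every basic open set. -/
def IsDenseK (X : Set (GenCantor κ)) : Prop :=
  ∀ δ < κ.ord, ∀ σ : Ordinal → Bool, (cyl κ δ σ ∩ X).Nonempty

/-- Coordinatewise addition modulo 2 on `2^κ`. -/
def addMod2 (x y : GenCantor κ) : GenCantor κ := fun α => Bool.xor (x α) (y α)

/-- The identification of `σ ∈ 2^{<κ}` (with domain `[0, δ)`) with the element of
`2^κ` extending `σ` by `0`'s. -/
def extendZero (δ : Ordinal) (σ : Ordinal → Bool) : GenCantor κ :=
  fun α => if α.1 < δ then σ α.1 else false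

end

end GenCichon

/-!
Let `B_γ = MismatchFrom x I γ` be the set of `y` that disagree with `x` somewhere on every
interval `I_α`, `α ≥ γ`.
A point fails to match `(x, I)` exactly when it lies in some `B_γ`, and each `B_γ` is nowhere
dense: a basic open set `[σ]` with `σ` of length `δ` is refined by copying `x` onto a whole
interval `I_α` with `α ≥ γ, δ`, which is possible because `κ` is a limit ordinal.
-/

namespace GenCichon

open Cardinal Set Ordinal

variable {κ : Cardinal.{0}}

theorem IsNwd.mono {A B : Set (GenCantor κ)} (hB : IsNwd κ B) (hAB : A ⊆ B) : IsNwd κ A := by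
  intro δ hδ σ
  obtain ⟨δ', hδδ', hδ'κ, σ', hσ', hdisj⟩ := hB δ hδ σ
  exact ⟨δ', hδδ', hδ'κ, σ', hσ', subset_empty_iff.mp (hdisj ▸ inter_subset_inter_right _ hAB)⟩

theorem IsKMeager.mono {A B : Set (GenCantor κ)} (hB : IsKMeager κ B) (hAB : A ⊆ B) :
    IsKMeager κ A := by
  obtain ⟨C, hC, rfl⟩ := hB
  refine ⟨fun i => C i ∩ A, fun i => (hC i).mono inter_subset_left, ?_⟩
  rw [← iUnion_inter, inter_eq_right.mpr hAB]

namespace IntervalPartition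

variable (I : IntervalPartition κ)

theorem le_pts {α : Ordinal} (hα : α < κ.ord) : α ≤ I.pts α := by
  let f : Idx κ → Idx κ := fun β => ⟨I.pts β, I.lt_ord β β.2⟩
  have hf : StrictMono f := fun β γ hβγ => I.strictMono β γ hβγ γ.2
  exact hf.le_apply (x := ⟨α, hα⟩)

end IntervalPartition

def MismatchFrom (x : GenCantor κ) (I : IntervalPartition κ) (γ : Ordinal) :
    Set (GenCantor κ) :=
  { y | ∀ α, γ ≤ α → α < κ.ord →
    ∃ β : Idx κ, I.pts α ≤ β.1 ∧ β.1 < I.pts (α + 1) ∧ y β ≠ x β }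

theorem compl_matchSet_eq_iUnion_mismatchFrom (x : GenCantor κ) (I : IntervalPartition κ) :
    (MatchSet κ x I)ᶜ = ⋃ γ : Idx κ, MismatchFrom x I γ := by
  ext y
  simp only [MatchSet, Matches, MismatchFrom, mem_compl_iff, mem_ofPred_eq, mem_iUnion]
  push Not
  exact ⟨fun ⟨γ, hγ, hy⟩ => ⟨⟨γ, hγ⟩, hy⟩, fun ⟨γ, hy⟩ => ⟨γ, γ.2, hy⟩⟩

theorem isNwd_mismatchFrom (hκ : ℵ₀ ≤ κ) (x : GenCantor κ) (I : IntervalPartition κ)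
    (γ : Ordinal) (hγ : γ < κ.ord) : IsNwd κ (MismatchFrom x I γ) := by
  intro δ hδ σ
  set α := max γ δ
  have hα : α < κ.ord := max_lt hγ hδ
  have hα1 : α + 1 < κ.ord := by
    rw [← Order.succ_eq_add_one]
    exact (isSuccLimit_ord hκ).succ_lt hα
  have hδα : δ ≤ I.pts α := (le_max_right γ δ).trans (I.le_pts hα)
  let σ' : Ordinal → Bool := fun β =>
    if β < δ then σ β else if hβ : β < κ.ord then x ⟨β, hβ⟩ else false
  refine ⟨I.pts (α + 1), (hδα.trans_lt (I.strictMono _ _ (lt_add_one α) hα1)).le,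
    I.lt_ord _ hα1, σ', fun β hβ => if_pos hβ, ?_⟩
  refine eq_empty_of_forall_notMem fun y ⟨hyσ', hy⟩ => ?_
  obtain ⟨β, hαβ, hβα, hne⟩ := hy α (le_max_left γ δ) hα
  have hβδ : ¬ β.1 < δ := not_lt.mpr (hδα.trans hαβ)
  have hσ'β : σ' β = x β := by
    simp only [σ', if_neg hβδ]
    exact dif_pos β.2
  exact hne ((hyσ' β hβα).trans hσ'β)

theorem isKMeager_compl_matchSet (hκ : ℵ₀ ≤ κ) (x : GenCantor κ) (I : IntervalPartition κ) :
    IsKMeager κ (MatchSet κ x I)ᶜ :=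
  ⟨fun γ => MismatchFrom x I γ, fun γ => isNwd_mismatchFrom hκ x I γ γ.2,
    compl_matchSet_eq_iUnion_mismatchFrom x I⟩

theorem combinatorially_meager_is_meager_general (κ : Cardinal.{0})
    (hunc : Cardinal.aleph0 < κ)
    (M : Set (GenCantor κ)) (x : GenCantor κ) (I : IntervalPartition κ)
    (h : ∀ y ∈ M, ¬ Matches κ y x I) :
    IsKMeager κ M :=
  (isKMeager_compl_matchSet hunc.le x I).mono h

theorem combinatorially_meager_is_meager (κ : Cardinal.{0})
    (hreg : κ.IsRegular) (hunc : Cardinal.aleph0 < κ)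
    (M : Set (GenCantor κ)) (x : GenCantor κ) (I : IntervalPartition κ)
    (h : ∀ y ∈ M, ¬ Matches κ y x I) :
    IsKMeager κ M :=
  combinatorially_meager_is_meager_general κ hunc M x I h

end GenCichon
end

section
/- Let κ be an uncountable regular cardinal. Then 𝔟_κ ≤ 𝔟_κ(≠*) ≤ non(𝓜_κ) and cov(𝓜_κ) ≤ 𝔡_κ(≠*) ≤ 𝔡_κ. -/
/-!
Eventual domination implies eventual difference, which gives `𝔟_κ ≤ 𝔟_κ(≠*)` and
`𝔡_κ(≠*) ≤ 𝔡_κ`. For the other two inequalities read `x ∈ 2^κ` as `x̂ ∈ κ^κ`, where `x̂(α)` is the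
length of the run of `0`s of `x` starting at `α`. Every condition extends to one forcing
`x̂(α) = g(α)` at any given large `α`, and by regularity `x̂ ≠* g` means that `x̂` and `g` differ
from some point on; so for each `g` the set of `x` with `x̂ ≠* g` is `κ`-meager. Hence the image of
a non-meager set is a `≠*`-unbounded family, and the meager sets attached to a `≠*`-dominating
family cover `2^κ`. For `𝔟_κ(≠*) ≤ non(𝓜_κ)` one also needs `2^κ` itself to be non-meager: this is
the `κ`-Baire category theorem, proved with a `κ`-chain of conditions that can be continued
through limit stages because `κ` is regular.
-/

namespace GenCichon

open Cardinal Set Ordinal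

section Order

variable {κ : Cardinal.{0}}

theorem mk_Iio_idx_lt (i : Idx κ) : #(Iio i) < lift.{1} κ := by
  calc #(Iio i) = #(Subtype.val '' Iio i) := (mk_image_eq Subtype.val_injective).symm
    _ ≤ #(Iio i.1) := mk_le_mk_of_subset (image_subset_iff.2 fun _ hj => hj)
    _ = lift.{1} i.1.card := Cardinal.mk_Iio_ordinal _
    _ < lift.{1} κ := lift_lt.2 (lt_ord.1 i.2)

theorem exists_forall_lt_of_mk_lt (hreg : κ.IsRegular) {S : Set (Idx κ)}
    (hS : #S < lift.{1} κ) : ∃ i, ∀ α ∈ S, α < i := by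
  by_contra! hcof
  have hcof' : Order.cof (Idx κ) ≤ #S := Order.cof_le fun i => hcof i
  rw [cof_Iio, ← lift_cof, hreg.cof_ord] at hcof'
  exact hcof'.not_gt hS

theorem exists_idx_gt (hκ : ℵ₀ ≤ κ) (i : Idx κ) : ∃ j : Idx κ, i < j :=
  ⟨⟨Order.succ i.1, (isSuccLimit_ord hκ).succ_lt i.2⟩, Order.lt_succ i.1⟩

end Order

section Eventually

variable {κ : Cardinal.{0}} {f g : GenBaire κ}

theorem evDiff_comm : EvDiff κ f g ↔ EvDiff κ g f := by
  simp only [EvDiff, eq_comm]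

theorem not_evDiff_self (g : GenBaire κ) : ¬ EvDiff κ g g := by
  simp [EvDiff, Cardinal.mk_Iio_ordinal]

theorem evDiff_of_forall_ge {i : Idx κ} (h : ∀ α, i ≤ α → f α ≠ g α) : EvDiff κ f g :=
  (mk_le_mk_of_subset fun α hα => not_le.1 fun hiα => h α hiα hα).trans_lt (mk_Iio_idx_lt i)

theorem evDiff_iff (hreg : κ.IsRegular) :
    EvDiff κ f g ↔ ∃ i, ∀ α, i ≤ α → f α ≠ g α := by
  refine ⟨fun h => ?_, fun ⟨i, hi⟩ => evDiff_of_forall_ge hi⟩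
  obtain ⟨i, hi⟩ := exists_forall_lt_of_mk_lt hreg h
  exact ⟨i, fun α hiα hα => (hi α hα).not_ge hiα⟩

theorem EvDom.evDiff (hκ : ℵ₀ ≤ κ) (h : EvDom κ f g) : EvDiff κ f g := by
  obtain ⟨α, hα⟩ := h
  obtain ⟨i, hαi⟩ := exists_idx_gt hκ α
  exact evDiff_of_forall_ge fun β hiβ => (hα β (hαi.trans_le hiβ)).ne

theorem exists_evDom (hκ : ℵ₀ ≤ κ) (g : GenBaire κ) : ∃ f, EvDom κ g f := by
  choose s hs using exists_idx_gt hκ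
  exact ⟨s ∘ g, ⟨0, ord_pos.2 (aleph0_pos.trans_le hκ)⟩, fun β _ => hs (g β)⟩

end Eventually

section Baire

/-- A condition `(δ, σ)` stands for the restriction of `σ` to `δ`, an element of `2^{<κ}`. -/
abbrev Condition : Type 1 := Ordinal.{0} × (Ordinal.{0} → Bool)

def Extends (q p : Condition) : Prop :=
  p.1 ≤ q.1 ∧ ∀ β < p.1, q.2 β = p.2 β

theorem Extends.refl (p : Condition) : Extends p p :=
  ⟨le_rfl, fun _ _ => rfl⟩

theorem Extends.trans {p q r : Condition} (hrq : Extends r q) (hqp : Extends q p) :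
    Extends r p :=
  ⟨hqp.1.trans hrq.1, fun β hβ => (hrq.2 β (hβ.trans_le hqp.1)).trans (hqp.2 β hβ)⟩

theorem Extends.cyl_subset (κ : Cardinal.{0}) {p q : Condition} (h : Extends q p) :
    cyl κ q.1 q.2 ⊆ cyl κ p.1 p.2 :=
  fun _ hx β hβ => (hx β (hβ.trans_le h.1)).trans (h.2 β hβ)

theorem eq_of_extends_or_extends {p q : Condition}
    (h : Extends q p ∨ Extends p q) {β : Ordinal} (hp : β < p.1) (hq : β < q.1) :
    p.2 β = q.2 β := by
  rcases h with h | h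
  · exact (h.2 β hp).symm
  · exact h.2 β hq

theorem extends_or_extends_of_forall_lt {ι : Type*} [LinearOrder ι] {p : ι → Condition}
    (hp : ∀ i, ∀ j < i, Extends (p i) (p j)) (i j : ι) :
    Extends (p i) (p j) ∨ Extends (p j) (p i) := by
  rcases lt_trichotomy i j with hij | rfl | hij
  · exact .inr (hp j i hij)
  · exact .inl (.refl _)
  · exact .inl (hp i j hij)

open Classical in
/-- The union of a family of pairwise compatible conditions. -/
noncomputable def glue {ι : Type*} (p : ι → Condition) : Condition :=
  (⨆ j, (p j).1, fun β => if h : ∃ j, β < (p j).1 then (p h.choose).2 β else false)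

theorem extends_glue {ι : Type*} {p : ι → Condition}
    (hp : ∀ j k, Extends (p j) (p k) ∨ Extends (p k) (p j))
    (hbdd : BddAbove (range fun j => (p j).1)) (j : ι) : Extends (glue p) (p j) := by
  refine ⟨le_ciSup hbdd j, fun β hβ => ?_⟩
  have h : ∃ k, β < (p k).1 := ⟨j, hβ⟩
  simp only [glue, dif_pos h]
  exact eq_of_extends_or_extends (hp j h.choose) h.choose_spec hβ

theorem glue_fst_lt {κ : Cardinal.{0}} (hreg : κ.IsRegular) {ι : Type*}
    {p : ι → Condition} (hι : #ι < lift κ) (hp : ∀ j, (p j).1 < κ.ord) :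
    (glue p).1 < κ.ord := by
  refine lift_iSup_lt_of_lt_cof ?_ hp
  rwa [← lift_cof, hreg.cof_ord, Cardinal.lift_uzero]

variable {κ : Cardinal.{0}}

noncomputable def condChain (E : Idx κ → Condition → Condition) : Idx κ → Condition :=
  wellFounded_lt.fix fun i rec => E i (glue fun j : Iio i => rec j j.2)

theorem condChain_eq (E : Idx κ → Condition → Condition)
    (i : Idx κ) : condChain E i = E i (glue fun j : Iio i => condChain E j) :=
  wellFounded_lt.fix_eq _ _

theorem condChain_spec (hreg : κ.IsRegular)
    {E : Idx κ → Condition → Condition}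
    (hE : ∀ i p, p.1 < κ.ord → Extends (E i p) p ∧ (E i p).1 < κ.ord) (i : Idx κ) :
    (condChain E i).1 < κ.ord ∧ ∀ j < i, Extends (condChain E i) (condChain E j) := by
  induction i using WellFoundedLT.induction with
  | _ i IH =>
  set p := fun j : Iio i => condChain E j
  have hcompat := extends_or_extends_of_forall_lt (p := p) fun j k hkj => (IH j j.2).2 k hkj
  have hbdd : BddAbove (range fun j => (p j).1) :=
    ⟨κ.ord, forall_mem_range.2 fun j => (IH j j.2).1.le⟩
  obtain ⟨hext, hlen⟩ := hE i _ (glue_fst_lt hreg (mk_Iio_idx_lt i) fun j => (IH j j.2).1)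
  rw [condChain_eq]
  exact ⟨hlen, fun j hj => hext.trans (extends_glue hcompat hbdd ⟨j, hj⟩)⟩

theorem not_isKMeager_univ (hreg : κ.IsRegular) : ¬ IsKMeager κ (univ : Set (GenCantor κ)) := by
  rintro ⟨B, hB, huniv⟩
  have hstep : ∀ i (p : Condition), ∃ q, p.1 < κ.ord →
      (Extends q p ∧ q.1 < κ.ord) ∧ cyl κ q.1 q.2 ∩ B i = ∅ := by
    intro i p
    by_cases hp : p.1 < κ.ord
    · obtain ⟨δ, hpδ, hδ, σ, hσ, hdisj⟩ := hB i p.1 hp p.2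
      exact ⟨(δ, σ), fun _ => ⟨⟨⟨hpδ, hσ⟩, hδ⟩, hdisj⟩⟩
    · exact ⟨p, fun h => absurd h hp⟩
  choose E hE using hstep
  have hchain := condChain_spec hreg fun i p hp => (hE i p hp).1
  have hbdd : BddAbove (range fun i => (condChain E i).1) :=
    ⟨κ.ord, forall_mem_range.2 fun i => (hchain i).1.le⟩
  have hcompat := extends_or_extends_of_forall_lt fun i => (hchain i).2
  let x : GenCantor κ := fun β => (glue (condChain E)).2 β.1
  obtain ⟨i, hi⟩ := mem_iUnion.1 (huniv ▸ mem_univ x)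
  have hx : x ∈ cyl κ (condChain E i).1 (condChain E i).2 :=
    (extends_glue hcompat hbdd i).cyl_subset κ fun _ _ => rfl
  rw [condChain_eq] at hx
  have hglue := glue_fst_lt hreg (mk_Iio_idx_lt i) fun j : Iio i => (hchain j).1
  exact (hE i _ hglue).2.subset ⟨hx, hi⟩

end Baire

section Coding

variable {κ : Cardinal.{0}}

theorem IsNwd.mono_s3 {A A' : Set (GenCantor κ)} (hA : IsNwd κ A) (h : A' ⊆ A) : IsNwd κ A' := by
  intro δ hδ σ
  obtain ⟨δ', hδδ', hδ', σ', hσ', hdisj⟩ := hA δ hδ σ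
  exact ⟨δ', hδδ', hδ', σ', hσ', subset_eq_empty (inter_subset_inter_right _ h) hdisj⟩

theorem IsKMeager.mono_s3 {A A' : Set (GenCantor κ)} (hA : IsKMeager κ A) (h : A' ⊆ A) :
    IsKMeager κ A' := by
  obtain ⟨B, hB, rfl⟩ := hA
  refine ⟨fun i => B i ∩ A', fun i => (hB i).mono_s3 inter_subset_left, ?_⟩
  rw [← iUnion_inter, inter_eq_right.2 h]

variable (κ) in
/-- `toBaire κ x α` is the length of the run of `false`s of `x` starting at `α`. The `else`
branch is never taken; it only spares a proof that the infimum is below `κ`. -/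
noncomputable def toBaire (x : GenCantor κ) : GenBaire κ := fun α =>
  let v := sInf {γ | ∃ h : α.1 + γ < κ.ord, x ⟨α.1 + γ, h⟩ = true}
  if h : v < κ.ord then ⟨v, h⟩ else α

theorem toBaire_apply_eq {x : GenCantor κ} {α v : Idx κ}
    (hv : ∃ h : α.1 + v.1 < κ.ord, x ⟨α.1 + v.1, h⟩ = true)
    (hlt : ∀ γ < v.1, ∀ h : α.1 + γ < κ.ord, x ⟨α.1 + γ, h⟩ = false) :
    toBaire κ x α = v := by
  have hinf : sInf {γ | ∃ h : α.1 + γ < κ.ord, x ⟨α.1 + γ, h⟩ = true} = v.1 :=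
    IsLeast.csInf_eq ⟨hv, fun γ ⟨h, hγ⟩ => not_lt.1 fun hγv => by simp [hlt γ hγv h] at hγ⟩
  simp only [toBaire, hinf]
  exact dif_pos v.2

theorem isNwd_setOf_forall_ne (hκ : ℵ₀ ≤ κ) (g : GenBaire κ) (i : Idx κ) :
    IsNwd κ {x | ∀ α, i ≤ α → toBaire κ x α ≠ g α} := by
  intro δ hδ σ
  let α : Idx κ := ⟨max δ i.1, max_lt hδ i.2⟩
  have hδα : δ ≤ α.1 := le_max_left _ _
  set v := (g α).1
  have hend : α.1 + v < κ.ord := isPrincipal_add_ord hκ α.2 (g α).2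
  -- extend `σ` by `false` on `[δ, α + v)` and `true` at `α + v`: this forces `toBaire κ x α = v`
  refine ⟨Order.succ (α.1 + v), hδα.trans (le_self_add.trans (Order.le_succ _)),
    (isSuccLimit_ord hκ).succ_lt hend, fun β => if β < δ then σ β else decide (β = α.1 + v),
    fun β hβ => if_pos hβ, eq_empty_of_forall_notMem ?_⟩
  rintro x ⟨hx, hxD⟩
  have hval : ∀ γ ≤ v, ∀ h : α.1 + γ < κ.ord, x ⟨α.1 + γ, h⟩ = decide (α.1 + γ = α.1 + v) := by
    intro γ hγ h
    exact (hx ⟨_, h⟩ (Order.lt_succ_iff.2 ((add_le_add_iff_left _).2 hγ))).trans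
      (if_neg (not_lt.2 (hδα.trans le_self_add)))
  refine hxD α (Subtype.coe_le_coe.1 (le_max_right _ _))
    (toBaire_apply_eq ⟨hend, ?_⟩ fun γ hγ h => ?_)
  · simpa using hval v le_rfl hend
  · rw [hval γ hγ.le h, decide_eq_false_iff_not]
    exact fun hγv => hγ.ne ((add_right_inj _).1 hγv)

theorem isKMeager_setOf_evDiff (hreg : κ.IsRegular) (g : GenBaire κ) :
    IsKMeager κ {x | EvDiff κ (toBaire κ x) g} :=
  ⟨fun i => {x | ∀ α, i ≤ α → toBaire κ x α ≠ g α},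
    fun i => isNwd_setOf_forall_ne hreg.aleph0_le g i,
    Set.ext fun _ => by rw [mem_iUnion]; exact evDiff_iff hreg⟩

end Coding

theorem csInf_le_csInf_of_forall_exists_le {α : Type*} [ConditionallyCompleteLinearOrderBot α]
    [WellFoundedLT α] {S T : Set α} (hT : T.Nonempty) (h : ∀ c ∈ T, ∃ c' ∈ S, c' ≤ c) :
    sInf S ≤ sInf T := by
  obtain ⟨c', hc', hle⟩ := h _ (csInf_mem hT)
  exact (csInf_le' hc').trans hle

section Inequalities

variable {κ : Cardinal.{0}}

theorem bK_le_bNeq (hκ : ℵ₀ ≤ κ) : bK κ ≤ bNeq κ := by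
  refine csInf_le_csInf_of_forall_exists_le
    ⟨_, univ, fun g => ⟨g, trivial, not_evDiff_self g⟩, rfl⟩ ?_
  rintro _ ⟨F, hF, rfl⟩
  exact ⟨_, ⟨F, fun g => (hF g).imp fun f => And.imp_right (mt (EvDom.evDiff hκ)), rfl⟩, le_rfl⟩

theorem bNeq_le_nonM (hreg : κ.IsRegular) : bNeq κ ≤ nonM κ := by
  refine csInf_le_csInf_of_forall_exists_le ⟨_, univ, not_isKMeager_univ hreg, rfl⟩ ?_
  rintro _ ⟨X, hX, rfl⟩
  refine ⟨_, ⟨toBaire κ '' X, fun g => ?_, rfl⟩, mk_image_le⟩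
  by_contra! hcode
  exact hX ((isKMeager_setOf_evDiff hreg g).mono_s3 fun x hx => hcode _ (mem_image_of_mem _ hx))

theorem covM_le_dNeq (hreg : κ.IsRegular) : covM κ ≤ dNeq κ := by
  refine csInf_le_csInf_of_forall_exists_le ⟨_, univ, fun g => ?_, rfl⟩ ?_
  · obtain ⟨f, hf⟩ := exists_evDom hreg.aleph0_le g
    exact ⟨f, trivial, evDiff_comm.1 (hf.evDiff hreg.aleph0_le)⟩
  rintro _ ⟨F, hF, rfl⟩
  refine ⟨_, ⟨(fun f => {x | EvDiff κ (toBaire κ x) f}) '' F, ?_, ?_, rfl⟩, mk_image_le⟩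
  · rintro _ ⟨f, -, rfl⟩
    exact isKMeager_setOf_evDiff hreg f
  · refine eq_univ_of_forall fun x => ?_
    obtain ⟨f, hf, hx⟩ := hF (toBaire κ x)
    exact mem_sUnion_of_mem (evDiff_comm.1 hx) (mem_image_of_mem _ hf)

theorem dNeq_le_dK (hκ : ℵ₀ ≤ κ) : dNeq κ ≤ dK κ := by
  refine csInf_le_csInf_of_forall_exists_le
    ⟨_, univ, fun g => (exists_evDom hκ g).imp fun _ h => ⟨trivial, h⟩, rfl⟩ ?_
  rintro _ ⟨F, hF, rfl⟩
  refine ⟨_, ⟨F, fun g => (hF g).imp fun f => And.imp_right fun h => ?_, rfl⟩, le_rfl⟩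
  exact evDiff_comm.1 (h.evDiff hκ)

end Inequalities

theorem evdiff_between_general (κ : Cardinal.{0})
    (hreg : κ.IsRegular) :
    (bK κ ≤ bNeq κ ∧ bNeq κ ≤ nonM κ) ∧ (covM κ ≤ dNeq κ ∧ dNeq κ ≤ dK κ) :=
  ⟨⟨bK_le_bNeq hreg.aleph0_le, bNeq_le_nonM hreg⟩,
    covM_le_dNeq hreg, dNeq_le_dK hreg.aleph0_le⟩

theorem evdiff_between (κ : Cardinal.{0})
    (hreg : κ.IsRegular) (hunc : Cardinal.aleph0 < κ) :
    (bK κ ≤ bNeq κ ∧ bNeq κ ≤ nonM κ) ∧ (covM κ ≤ dNeq κ ∧ dNeq κ ≤ dK κ) :=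
  evdiff_between_general κ hreg

end GenCichon
end

section
/- Assume κ is strongly inaccessible. Then add(𝓜_κ) ≤ 𝔟_κ and 𝔡_κ ≤ cof(𝓜_κ). -/
/-!
To each `g ∈ κ^κ` attach an interval sequence `I` outpacing `g`; the set of `y ∈ 2^κ` that
eventually differ from the constant `1` on every interval of `I` is `κ`-meager. By fusion, using
that `2^{<κ}` is `<κ`-closed and `2 ^ |a| < κ` for `a < κ`, every `κ`-meager set `B` is disjoint
from the set of `y` matching some chopped real `(x, e)`. If the meager set attached to `g` lies in
`B`, then eventually every interval of `e` contains an interval of `I` (otherwise some `y` matches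
`(x, e)` but not `(1, I)`), so `g` is dominated by `β ↦ e (ν + 1)`, `ν` least with `β < e ν`,
which depends on `B` only. Hence an unbounded family `F` gives `|F|` meager sets with non-meager
union, and a cofinal family of meager sets gives a dominating family of the same size.
-/

namespace GenCichon

open Cardinal Set Ordinal

variable {κ : Cardinal.{0}}

theorem iSup_Iio_lt_ord (hκ : κ.IsRegular) {η : Ordinal.{0}} (hη : η < κ.ord)
    {f : Iio η → Ordinal.{0}} (hf : ∀ i, f i < κ.ord) : ⨆ i, f i < κ.ord :=
  Ordinal.lift_iSup_lt_of_lt_cof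
    (by rwa [← lift_cof, hκ.cof_ord, Cardinal.mk_Iio_ordinal, Cardinal.lift_lift,
      Cardinal.lift_lt, ← lt_ord]) hf

theorem add_one_lt_ord (hκ : ℵ₀ ≤ κ) {a : Ordinal.{0}} (ha : a < κ.ord) : a + 1 < κ.ord :=
  (isSuccLimit_ord hκ).add_one_lt ha

noncomputable def ladder (F : Ordinal.{0} → Ordinal.{0}) (η : Ordinal.{0}) : Ordinal.{0} :=
  ⨆ ι : Iio η, max (F (ladder F ι)) (ladder F ι) + 1
termination_by η
decreasing_by exact ι.2

theorem lt_ladder (F : Ordinal.{0} → Ordinal.{0}) {η' η : Ordinal.{0}} (h : η' < η) :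
    max (F (ladder F η')) (ladder F η') < ladder F η := by
  rw [ladder.eq_1 F η]
  exact lt_iSup_add_one (fun ι : Iio η => max (F (ladder F ι)) (ladder F ι)) ⟨η', h⟩

theorem ladder_strictMono (F : Ordinal.{0} → Ordinal.{0}) : StrictMono (ladder F) :=
  fun _ _ h => (le_max_right _ _).trans_lt (lt_ladder F h)

theorem lt_ladder_add_one (F : Ordinal.{0} → Ordinal.{0}) (η : Ordinal.{0}) :
    F (ladder F η) < ladder F (η + 1) :=
  (le_max_left _ _).trans_lt (lt_ladder F (lt_add_one η))

theorem ladder_lt_ord (hκ : κ.IsRegular) {F : Ordinal.{0} → Ordinal.{0}}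
    (hF : ∀ a < κ.ord, F a < κ.ord) {η : Ordinal.{0}} (hη : η < κ.ord) : ladder F η < κ.ord := by
  induction η using WellFoundedLT.induction with | ind η IH
  rw [ladder.eq_1]
  refine iSup_Iio_lt_ord hκ hη fun ι => add_one_lt_ord hκ.aleph0_le (max_lt ?_ ?_)
  · exact hF _ (IH ι ι.2 (ι.2.trans hη))
  · exact IH ι ι.2 (ι.2.trans hη)

theorem _root_.StrictMono.eq_of_mem_Ico_add_one {α β : Type*} [LinearOrder α] [Add α] [One α]
    [SuccAddOrder α] [Preorder β] {e : α → β} (he : StrictMono e) {k k' : α} {b : β}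
    (hk : b ∈ Ico (e k) (e (k + 1))) (hk' : b ∈ Ico (e k') (e (k' + 1))) : k = k' := by
  by_contra hne
  rcases lt_or_gt_of_ne hne with h | h
  · exact (hk.2.trans_le ((he.monotone (Order.add_one_le_of_lt h)).trans hk'.1)).false
  · exact (hk'.2.trans_le ((he.monotone (Order.add_one_le_of_lt h)).trans hk.1)).false

variable (κ) in
def IsIntervalSeq (e : Ordinal.{0} → Ordinal.{0}) : Prop :=
  StrictMono e ∧ ∀ k < κ.ord, e k < κ.ord

theorem isIntervalSeq_ladder (hκ : κ.IsRegular) {F : Ordinal.{0} → Ordinal.{0}}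
    (hF : ∀ a < κ.ord, F a < κ.ord) : IsIntervalSeq κ (ladder F) :=
  ⟨ladder_strictMono F, fun _ => ladder_lt_ord hκ hF⟩

variable (κ) in
/-- `Matches` for interval sequences that need not be continuous or start at `0`. -/
def MatchesAlong (e : Ordinal.{0} → Ordinal.{0}) (y x : GenCantor κ) : Prop :=
  ∀ γ < κ.ord, ∃ k, γ ≤ k ∧ k < κ.ord ∧
    ∀ β : Idx κ, e k ≤ β.1 → β.1 < e (k + 1) → y β = x β

theorem isNwd_setOf_forall_exists_ne (hκ : ℵ₀ ≤ κ) {e : Ordinal.{0} → Ordinal.{0}}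
    (he : IsIntervalSeq κ e) (x : GenCantor κ) (γ : Idx κ) :
    IsNwd κ {y | ∀ k, γ.1 ≤ k → k < κ.ord →
      ∃ β : Idx κ, e k ≤ β.1 ∧ β.1 < e (k + 1) ∧ y β ≠ x β} := by
  intro δ hδ σ
  set k := max γ.1 δ
  have hk : k < κ.ord := max_lt γ.2 hδ
  have hδk : δ ≤ e k := (le_max_right _ _).trans he.1.le_apply
  refine ⟨e (k + 1), hδk.trans (he.1 (lt_add_one k)).le, he.2 _ (add_one_lt_ord hκ hk),
    fun β => if β < δ then σ β else if h : β < κ.ord then x ⟨β, h⟩ else false,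
    fun β hβ => if_pos hβ, ?_⟩
  refine eq_empty_of_forall_notMem fun y ⟨hcyl, hy⟩ => ?_
  obtain ⟨β, hβk, hβk', hne⟩ := hy k (le_max_left _ _) hk
  have hyβ := hcyl β hβk'
  dsimp only at hyβ
  rw [if_neg (hδk.trans hβk).not_gt, dif_pos (mem_Iio.1 β.2)] at hyβ
  exact hne hyβ

theorem isKMeager_setOf_not_matchesAlong (hκ : ℵ₀ ≤ κ) {e : Ordinal.{0} → Ordinal.{0}}
    (he : IsIntervalSeq κ e) (x : GenCantor κ) :
    IsKMeager κ {y | ¬ MatchesAlong κ e y x} := by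
  refine ⟨_, isNwd_setOf_forall_exists_ne hκ he x, ?_⟩
  ext y
  simp only [MatchesAlong, mem_ofPred_eq, mem_iUnion]
  push Not
  exact ⟨fun ⟨γ, hγ, h⟩ => ⟨⟨γ, hγ⟩, h⟩, fun ⟨γ, h⟩ => ⟨γ.1, γ.2, h⟩⟩

variable (κ) in
def Outpaces (I : Ordinal.{0} → Ordinal.{0}) (g : GenBaire κ) : Prop :=
  ∀ k < κ.ord, ∀ β : Idx κ, β.1 ≤ I k → (g β).1 < I (k + 1)

theorem exists_isIntervalSeq_outpaces (hκ : κ.IsRegular) (g : GenBaire κ) :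
    ∃ I, IsIntervalSeq κ I ∧ Outpaces κ I g := by
  let F (a : Ordinal.{0}) : Ordinal.{0} :=
    ⨆ β : Iio (a + 1), if h : β.1 < κ.ord then (g ⟨β, h⟩).1 else 0
  refine ⟨ladder F, isIntervalSeq_ladder hκ fun a ha => ?_, fun k _ β hβ => ?_⟩
  · refine iSup_Iio_lt_ord hκ (add_one_lt_ord hκ.aleph0_le ha) fun β => ?_
    split_ifs
    exacts [(g _).2, (isSuccLimit_ord hκ.aleph0_le).bot_lt]
  · calc (g β).1 ≤ F (ladder F k) := by
          convert Ordinal.le_iSup _ (⟨β.1, Order.lt_add_one_iff.2 hβ⟩ : Iio (ladder F k + 1))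
          simp [not_le.2 (mem_Iio.1 β.2)]
      _ < ladder F (k + 1) := lt_ladder_add_one F k

variable (κ) in
def Engulfs (e I : Ordinal.{0} → Ordinal.{0}) : Prop :=
  ∃ γ < κ.ord, ∀ α, γ ≤ α → α < κ.ord → ∃ k < κ.ord, e α ≤ I k ∧ I (k + 1) ≤ e (α + 1)

theorem exists_evDom_of_engulfs (hκ : ℵ₀ ≤ κ) {e : Ordinal.{0} → Ordinal.{0}}
    (he : IsIntervalSeq κ e) :
    ∃ h : GenBaire κ, ∀ (g : GenBaire κ) (I : Ordinal.{0} → Ordinal.{0}),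
      Outpaces κ I g → Engulfs κ e I → EvDom κ g h := by
  let ν (β : Idx κ) : Ordinal.{0} := sInf {α | β.1 < e α}
  have hν (β : Idx κ) : β.1 < e (ν β) ∧ ν β ≤ β.1 + 1 := by
    have hmem : β.1 + 1 ∈ {α | β.1 < e α} := (lt_add_one _).trans_le he.1.le_apply
    exact ⟨csInf_mem ⟨_, hmem⟩, csInf_le' hmem⟩
  have hνκ (β : Idx κ) : ν β < κ.ord := (hν β).2.trans_lt (add_one_lt_ord hκ β.2)
  refine ⟨fun β => ⟨e (ν β + 1), he.2 _ (add_one_lt_ord hκ (hνκ β))⟩, ?_⟩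
  rintro g I hgI ⟨γ, hγ, hI⟩
  refine ⟨⟨e γ, he.2 γ hγ⟩, fun β hβ => ?_⟩
  have hγν : γ ≤ ν β := he.1.le_iff_le.1 (le_of_lt ((Subtype.coe_lt_coe.2 hβ).trans (hν β).1))
  obtain ⟨k, hk, hek, hIk⟩ := hI (ν β) hγν (hνκ β)
  exact (hgI k hk β ((hν β).1.le.trans hek)).trans_le hIk

theorem exists_sparse_seq (hκ : κ.IsRegular) {A : Set Ordinal.{0}}
    (hA : ∀ γ < κ.ord, ∃ α ∈ A, γ ≤ α ∧ α < κ.ord) :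
    ∃ α : Ordinal.{0} → Ordinal.{0}, ∀ η < κ.ord, α η ∈ A ∧ η ≤ α η ∧ α η < κ.ord ∧
      ∀ η' < κ.ord, η < η' → α η + 1 < α η' := by
  choose! pick hpickA hpick_ge hpick_lt using hA
  let t := ladder fun a => pick (a + 1)
  have ht (η) (hη : η < κ.ord) : t η + 1 < κ.ord :=
    add_one_lt_ord hκ.aleph0_le <| ladder_lt_ord hκ
      (fun a ha => hpick_lt _ (add_one_lt_ord hκ.aleph0_le ha)) hη
  refine ⟨fun η => pick (t η + 1), fun η hη => ⟨hpickA _ (ht η hη), ?_, hpick_lt _ (ht η hη),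
    fun η' hη' hηη' => ?_⟩⟩
  · exact (ladder_strictMono _).le_apply.trans ((lt_add_one _).le.trans (hpick_ge _ (ht η hη)))
  · calc pick (t η + 1) + 1 ≤ t η' := Order.add_one_le_of_lt <| (lt_ladder_add_one _ η).trans_le
          ((ladder_strictMono _).monotone (Order.add_one_le_of_lt hηη'))
      _ < t η' + 1 := lt_add_one _
      _ ≤ pick (t η' + 1) := hpick_ge _ (ht η' hη')

theorem engulfs_of_forall_matchesAlong (hκ : κ.IsRegular) {e I : Ordinal.{0} → Ordinal.{0}}
    (he : IsIntervalSeq κ e) (hI : IsIntervalSeq κ I) {x z : GenCantor κ}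
    (H : ∀ y, MatchesAlong κ e y x → MatchesAlong κ I y z) : Engulfs κ e I := by
  classical
  by_contra hne
  simp only [Engulfs, not_exists, not_and, not_forall, not_le] at hne
  obtain ⟨α, hα⟩ := exists_sparse_seq hκ
    (A := {α | ∀ k < κ.ord, e α ≤ I k → e (α + 1) < I (k + 1)}) fun γ hγ => by
      obtain ⟨α, hγα, hα, hbad⟩ := hne γ hγ
      exact ⟨α, fun k hk h => hbad k hk h, hγα, hα⟩
  -- `y` copies `x` on the (pairwise non-adjacent) intervals `α η` of `e` and differs from `z`
  -- elsewhere; no interval of `I` fits inside one interval `α η`, so none avoids the rest.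
  let R (β : Ordinal.{0}) : Prop := ∃ η < κ.ord, β ∈ Ico (e (α η)) (e (α η + 1))
  let y : GenCantor κ := fun β => if R β.1 then x β else !z β
  obtain ⟨k, -, hk, hyz⟩ := H y (fun γ hγ => ⟨α γ, (hα γ hγ).2.1, (hα γ hγ).2.2.1,
    fun β h₁ h₂ => if_pos ⟨γ, hγ, h₁, h₂⟩⟩) 0 (isSuccLimit_ord hκ.aleph0_le).bot_lt
  have hR (β : Idx κ) (h₁ : I k ≤ β.1) (h₂ : β.1 < I (k + 1)) : R β.1 := by
    by_contra hRβ
    simpa [y, hRβ] using hyz β h₁ h₂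
  have hIk : I k < I (k + 1) := hI.1 (lt_add_one k)
  obtain ⟨η, hη, hIkη⟩ := hR ⟨I k, hI.2 k hk⟩ le_rfl hIk
  have hlt : e (α η + 1) < I (k + 1) := (hα η hη).1 k hk hIkη.1
  obtain ⟨η', hη', hmem⟩ :=
    hR ⟨e (α η + 1), he.2 _ (add_one_lt_ord hκ.aleph0_le (hα η hη).2.2.1)⟩ hIkη.2.le hlt
  have hsucc : α η + 1 = α η' := he.1.eq_of_mem_Ico_add_one ⟨le_rfl, he.1 (lt_add_one _)⟩ hmem
  rcases lt_trichotomy η η' with h | rfl | h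
  · exact (hα η hη).2.2.2 η' hη' h |>.ne hsucc
  · exact (lt_add_one (α η)).ne' hsucc
  · exact (((lt_add_one _).trans ((hα η' hη').2.2.2 η hη h)).trans (lt_add_one _)).ne' hsucc

/-- An element of `2^{<κ}`: only the values of `val` below `len` matter. -/
structure Condition_s10 where
  len : Ordinal.{0}
  val : Ordinal.{0} → Bool

namespace Condition_s10

instance : Inhabited Condition_s10 := ⟨⟨0, fun _ => false⟩⟩

instance : Preorder Condition_s10 where
  le p q := p.len ≤ q.len ∧ ∀ β < p.len, q.val β = p.val β
  le_refl _ := ⟨le_rfl, fun _ _ => rfl⟩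
  le_trans _ _ _ hpq hqr :=
    ⟨hpq.1.trans hqr.1, fun β hβ => (hqr.2 β (hβ.trans_le hpq.1)).trans (hpq.2 β hβ)⟩

open Classical in
noncomputable def glue (q₀ : Condition_s10) {ι : Type*} (s : ι → Condition_s10) : Condition_s10 where
  len := max q₀.len (⨆ i, (s i).len)
  val β := if h : ∃ i, β < (s i).len then (s h.choose).val β else q₀.val β

theorem le_glue {q₀ : Condition_s10} {ι : Type*} [Small.{0} ι] {s : ι → Condition_s10}
    (hs : Directed (· ≤ ·) s) (h₀ : ∀ i, q₀ ≤ s i) :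
    q₀ ≤ glue q₀ s ∧ ∀ i, s i ≤ glue q₀ s := by
  refine ⟨⟨le_max_left _ _, fun β hβ => ?_⟩, fun i => ⟨?_, fun β hβ => ?_⟩⟩
  · simp only [glue]
    split_ifs with h
    exacts [(h₀ _).2 β hβ, rfl]
  · exact (Ordinal.le_iSup (fun i => (s i).len) i).trans (le_max_right _ _)
  · have h : ∃ j, β < (s j).len := ⟨i, hβ⟩
    simp only [glue, dif_pos h]
    obtain ⟨k, hik, hjk⟩ := hs i h.choose
    exact (hjk.2 β h.choose_spec).symm.trans (hik.2 β hβ)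

theorem glue_len_lt (hκ : κ.IsRegular) {q₀ : Condition_s10} (hq₀ : q₀.len < κ.ord)
    {η : Ordinal.{0}} (hη : η < κ.ord) {s : Iio η → Condition_s10} (hs : ∀ i, (s i).len < κ.ord) :
    (glue q₀ s).len < κ.ord :=
  max_lt hq₀ (iSup_Iio_lt_ord hκ hη hs)

noncomputable def iterate (next : Ordinal.{0} → Condition_s10 → Condition_s10) (q₀ : Condition_s10)
    (η : Ordinal.{0}) : Condition_s10 :=
  next η (glue q₀ fun ι : Iio η => iterate next q₀ ι)
termination_by η
decreasing_by exact ι.2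

variable {next : Ordinal.{0} → Condition_s10 → Condition_s10} {q₀ : Condition_s10}

theorem le_iterate (hnext : ∀ η q, q ≤ next η q) (η : Ordinal.{0}) :
    q₀ ≤ iterate next q₀ η ∧ ∀ η' < η, iterate next q₀ η' ≤ iterate next q₀ η := by
  induction η using WellFoundedLT.induction with | ind η IH
  have hmono (i j : Iio η) (hij : i ≤ j) : iterate next q₀ i ≤ iterate next q₀ j := by
    rcases hij.lt_or_eq with h | h
    exacts [(IH j j.2).2 i h, h ▸ le_rfl]
  have hglue := le_glue (q₀ := q₀) (s := fun ι : Iio η => iterate next q₀ ι)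
    (fun i j => ⟨max i j, hmono _ _ (le_max_left i j), hmono _ _ (le_max_right i j)⟩)
    fun i => (IH i i.2).1
  rw [iterate.eq_1]
  exact ⟨hglue.1.trans (hnext _ _), fun η' hη' => (hglue.2 ⟨η', hη'⟩).trans (hnext _ _)⟩

theorem iterate_len_lt (hκ : κ.IsRegular)
    (hnext : ∀ η q, q.len < κ.ord → (next η q).len < κ.ord) (hq₀ : q₀.len < κ.ord)
    {η : Ordinal.{0}} (hη : η < κ.ord) :
    (iterate next q₀ η).len < κ.ord := by
  induction η using WellFoundedLT.induction with | ind η IH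
  rw [iterate.eq_1]
  exact hnext _ _ (glue_len_lt hκ hq₀ hη fun ι => IH ι ι.2 (ι.2.trans hη))

/-- `2^{<κ}` is `<κ`-closed, so fewer than `κ` dense sets can be met along a single chain. -/
theorem exists_ge_forall_exists_mem_le (hκ : κ.IsRegular) {ι : Type 1}
    (hι : #ι < Cardinal.lift.{1} κ) (D : ι → Set Condition_s10)
    (hD : ∀ i q, q.len < κ.ord → ∃ q' ∈ D i, q ≤ q' ∧ q'.len < κ.ord) (hq₀ : q₀.len < κ.ord) :
    ∃ q, q₀ ≤ q ∧ q.len < κ.ord ∧ ∀ i, ∃ q' ∈ D i, q' ≤ q := by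
  classical
  obtain ⟨c, hc⟩ := Cardinal.mem_range_lift_of_le hι.le
  have hcκ : c < κ := Cardinal.lift_lt.1 (hc ▸ hι)
  obtain ⟨f⟩ : Nonempty (Iio c.ord ≃ ι) :=
    Cardinal.eq.1 (by rw [Cardinal.mk_Iio_ordinal, card_ord, hc])
  choose! extend hextendD hextend_le hextend_lt using hD
  let next (η : Ordinal.{0}) (q : Condition_s10) : Condition_s10 :=
    if h : η < c.ord ∧ q.len < κ.ord then extend (f ⟨η, h.1⟩) q else q
  have hnext_le (η q) : q ≤ next η q := by
    simp only [next]; split_ifs with h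
    exacts [hextend_le _ _ h.2, le_rfl]
  have hnext_lt (η q) (hq : q.len < κ.ord) : (next η q).len < κ.ord := by
    simp only [next]; split_ifs with h
    exacts [hextend_lt _ _ h.2, hq]
  have hnext_eq (η) (h : η < c.ord) (q : Condition_s10) (hq : q.len < κ.ord) :
      next η q = extend (f ⟨η, h⟩) q :=
    dif_pos ⟨h, hq⟩
  have hcord : c.ord < κ.ord := ord_lt_ord.2 hcκ
  refine ⟨iterate next q₀ c.ord, (le_iterate hnext_le _).1,
    iterate_len_lt hκ hnext_lt hq₀ hcord, fun i => ?_⟩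
  have hη : (f.symm i).1 < κ.ord := (f.symm i).2.trans hcord
  have hG := glue_len_lt hκ hq₀ hη fun ι : Iio (f.symm i).1 =>
    iterate_len_lt hκ hnext_lt hq₀ (ι.2.trans hη)
  refine ⟨iterate next q₀ (f.symm i), ?_, (le_iterate hnext_le _).2 _ (f.symm i).2⟩
  rw [iterate.eq_1, hnext_eq _ (f.symm i).2 _ hG, Subtype.coe_eta, f.apply_symm_apply]
  exact hextendD _ _ hG

end Condition_s10

theorem cyl_congr {δ : Ordinal.{0}} {σ σ' : Ordinal.{0} → Bool} (h : ∀ β < δ, σ β = σ' β) :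
    cyl κ δ σ = cyl κ δ σ' := by
  ext y
  exact forall₂_congr fun β hβ => by rw [h β hβ]

theorem IsNwd.exists_ge_cyl_inter_eq_empty {N : Set (GenCantor κ)} (hN : IsNwd κ N)
    {a : Ordinal.{0}} (ha : a < κ.ord) (τ : Ordinal.{0} → Bool) {q : Condition_s10}
    (hq : q.len < κ.ord) :
    ∃ q' : Condition_s10, q ≤ q' ∧ a ≤ q'.len ∧ q'.len < κ.ord ∧
      cyl κ q'.len (fun β => if β < a then τ β else q'.val β) ∩ N = ∅ := by
  obtain ⟨δ, hδ, hδκ, σ, hσ, hcyl⟩ :=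
    hN (max a q.len) (max_lt ha hq) fun β => if β < a then τ β else q.val β
  refine ⟨⟨δ, fun β => if β < a then q.val β else σ β⟩,
    ⟨(le_max_right _ _).trans hδ, fun β hβ => ?_⟩, (le_max_left _ _).trans hδ, hδκ, ?_⟩
  · by_cases hβa : β < a
    · exact if_pos hβa
    · simp only [if_neg hβa, hσ β (lt_max_of_lt_right hβ)]
  · rwa [← cyl_congr fun β _ => ?_] at hcyl
    by_cases hβa : β < a
    · simp only [if_pos hβa, hσ β (lt_max_of_lt_left hβa)]
    · simp only [if_neg hβa]

/-- Meet one dense set for each of the `2 ^ |a| * |a| < κ` pairs of a stem of length `a` and an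
index `i < a`. -/
theorem exists_condition_forall_not_mem (hκ : κ.IsInaccessible) {N : Idx κ → Set (GenCantor κ)}
    (hN : ∀ i, IsNwd κ (N i)) {a : Ordinal.{0}} (ha : a < κ.ord) :
    ∃ q : Condition_s10, a ≤ q.len ∧ q.len < κ.ord ∧ ∀ i : Idx κ, i.1 < a → ∀ y : GenCantor κ,
      (∀ β : Idx κ, a ≤ β.1 → β.1 < q.len → y β = q.val β.1) → y ∉ N i := by
  classical
  let stem (τ : Iio a → Bool) (β : Ordinal.{0}) : Bool := if h : β < a then τ ⟨β, h⟩ else false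
  let D (p : (Iio a → Bool) × Iio a) : Set Condition_s10 := {q | a ≤ q.len ∧
    cyl κ q.len (fun β => if β < a then stem p.1 β else q.val β) ∩ N ⟨p.2, p.2.2.trans ha⟩ = ∅}
  have hcard : #((Iio a → Bool) × Iio a) < Cardinal.lift.{1} κ := by
    have := Cardinal.mul_lt_of_lt hκ.isRegular.aleph0_le
      (hκ.isStrongLimit.isStrongPrelimit (Cardinal.lt_ord.1 ha)) (Cardinal.lt_ord.1 ha)
    simpa [Cardinal.mk_Iio_ordinal] using Cardinal.lift_lt.2 this
  obtain ⟨q, hq₀, hq, hqD⟩ := Condition_s10.exists_ge_forall_exists_mem_le hκ.isRegular hcard D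
    (fun p q hq => by
      obtain ⟨q', hqq', haq', hq', hcyl⟩ := (hN _).exists_ge_cyl_inter_eq_empty ha
        (stem p.1) hq
      exact ⟨q', ⟨haq', hcyl⟩, hqq', hq'⟩) (q₀ := ⟨a, fun _ => false⟩) ha
  refine ⟨q, hq₀.1, hq, fun i hi y hy hyN => ?_⟩
  obtain ⟨q', ⟨-, hcyl⟩, hq'q⟩ := hqD (fun b => y ⟨b, b.2.trans ha⟩, ⟨i, hi⟩)
  refine (eq_empty_iff_forall_notMem.1 hcyl) y ⟨fun β hβ => ?_, hyN⟩
  by_cases hβa : β.1 < a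
  · simp [stem, hβa]
  · simp only [if_neg hβa, ← hq'q.2 β hβ]
    exact hy β (not_lt.1 hβa) (hβ.trans_le hq'q.1)

theorem exists_matchesAlong_not_mem (hκ : κ.IsInaccessible) {B : Set (GenCantor κ)}
    (hB : IsKMeager κ B) :
    ∃ e x, IsIntervalSeq κ e ∧ ∀ y, MatchesAlong κ e y x → y ∉ B := by
  classical
  obtain ⟨N, hN, rfl⟩ := hB
  choose! q hqa hqκ hq using fun a (ha : a < κ.ord) => exists_condition_forall_not_mem hκ hN ha
  let e := ladder fun a => (q a).len
  have he : IsIntervalSeq κ e := isIntervalSeq_ladder hκ.isRegular hqκ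
  let x : GenCantor κ := fun β =>
    if h : ∃ k, β.1 ∈ Ico (e k) (e (k + 1)) then (q (e h.choose)).val β else false
  refine ⟨e, x, he, fun y hy => ?_⟩
  simp only [mem_iUnion, not_exists]
  intro i hyN
  obtain ⟨k, hik, hk, hyx⟩ := hy (i.1 + 1) (add_one_lt_ord hκ.isRegular.aleph0_le i.2)
  refine hq (e k) (he.2 k hk) i ((lt_add_one _).trans_le (hik.trans he.1.le_apply)) y
    (fun β h₁ h₂ => ?_) hyN
  have hβ : β.1 ∈ Ico (e k) (e (k + 1)) := ⟨h₁, h₂.trans (lt_ladder_add_one _ k)⟩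
  have hex : ∃ k, β.1 ∈ Ico (e k) (e (k + 1)) := ⟨k, hβ⟩
  rw [hyx β hβ.1 hβ.2]
  simp only [x, dif_pos hex, he.1.eq_of_mem_Ico_add_one hex.choose_spec hβ]

theorem exists_evDom_of_isKMeager (hκ : κ.IsInaccessible) {B : Set (GenCantor κ)}
    (hB : IsKMeager κ B) :
    ∃ h : GenBaire κ, ∀ (z : GenCantor κ) (g : GenBaire κ) (I : Ordinal.{0} → Ordinal.{0}),
      IsIntervalSeq κ I → Outpaces κ I g → {y | ¬ MatchesAlong κ I y z} ⊆ B → EvDom κ g h := by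
  obtain ⟨e, x, he, hex⟩ := exists_matchesAlong_not_mem hκ hB
  obtain ⟨h, hh⟩ := exists_evDom_of_engulfs hκ.isRegular.aleph0_le he
  refine ⟨h, fun z g I hI hgI hIB => hh g I hgI ?_⟩
  refine engulfs_of_forall_matchesAlong (x := x) (z := z) hκ.isRegular he hI fun y hy => ?_
  by_contra hyz
  exact hex y hy (hIB hyz)

theorem not_evDom_self (hκ : ℵ₀ ≤ κ) (g : GenBaire κ) : ¬ EvDom κ g g := fun ⟨α, hα⟩ =>
  (hα ⟨α.1 + 1, add_one_lt_ord hκ α.2⟩ (lt_add_one α.1)).false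

theorem addM_le_bK (hκ : κ.IsInaccessible) : addM κ ≤ bK κ := by
  refine le_csInf ⟨_, univ, fun g => ⟨g, mem_univ g, not_evDom_self hκ.isRegular.aleph0_le g⟩,
    rfl⟩ ?_
  rintro _ ⟨F, hF, rfl⟩
  choose I hI hIg using exists_isIntervalSeq_outpaces hκ.isRegular
  let M (f : GenBaire κ) : Set (GenCantor κ) := {y | ¬ MatchesAlong κ (I f) y fun _ => true}
  refine (csInf_le' ?_).trans (mk_image_le (f := M))
  refine ⟨M '' F, ?_, fun hmeager => ?_, rfl⟩
  · rintro _ ⟨f, -, rfl⟩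
    exact isKMeager_setOf_not_matchesAlong hκ.isRegular.aleph0_le (hI f) _
  · obtain ⟨h, hh⟩ := exists_evDom_of_isKMeager hκ hmeager
    obtain ⟨f, hf, hfh⟩ := hF h
    exact hfh (hh _ f (I f) (hI f) (hIg f) (subset_sUnion_of_mem (mem_image_of_mem M hf)))

theorem dK_le_cofM (hκ : κ.IsInaccessible) : dK κ ≤ cofM κ := by
  refine le_csInf
    ⟨_, {A | IsKMeager κ A}, fun _ h => h, fun A hA => ⟨A, hA, subset_rfl⟩, rfl⟩ ?_
  rintro _ ⟨J, hJ, hJcof, rfl⟩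
  have : Nonempty (GenBaire κ) := ⟨id⟩
  choose! h hh using fun B (hB : B ∈ J) => exists_evDom_of_isKMeager hκ (hJ B hB)
  refine (csInf_le' ?_).trans (mk_image_le (f := h))
  refine ⟨h '' J, fun g => ?_, rfl⟩
  obtain ⟨I, hI, hgI⟩ := exists_isIntervalSeq_outpaces hκ.isRegular g
  obtain ⟨B, hB, hMB⟩ :=
    hJcof _ (isKMeager_setOf_not_matchesAlong hκ.isRegular.aleph0_le hI fun _ => true)
  exact ⟨h B, mem_image_of_mem h hB, hh B hB _ g I hI hgI hMB⟩

end GenCichon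

namespace GenCichon

open Cardinal Set Ordinal

theorem addM_le_bK_and_dK_le_cofM (κ : Cardinal.{0}) (hinacc : κ.IsInaccessible) :
    addM κ ≤ bK κ ∧ dK κ ≤ cofM κ :=
  ⟨addM_le_bK hinacc, dK_le_cofM hinacc⟩

end GenCichon
end
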